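/- Let n ≥ 1 and let f be a solution of the n×n Pulsar puzzle. Then the top row satisfies the symmetric sum property: for every i with 1 ≤ i ≤ n, f(1,i) + f(1,n+1−i) = n+1. -/

import Mathlib

/-!
Let `s c` be the number of circled cells in column `c`. Below its top row, `C (n + 1)` is a
rotated copy of `C n`, so column counts of `C (n + 1)` are row counts of `C n` plus one and row
counts of `C (n + 1)` are column counts of `C n`; by induction `s` permutes `{1, …, n}` and
`s c + s (n + 1 - c) = n + 1`.

In a solution the top row is a permutation of `{1, …, n}` made of circled cells, so each value `v`
sits on exactly `v` circled cells. Fix `k` and count the circled cells with value at least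
`n + 1 - k`: there are `∑_{w > n - k} w = ∑_j min j k` of them, while column `c` holds at most
`min (s c) k` of them. So every column attains this bound, and for `k = s c` the cell `(1, c)`
gives `f (1, c) + s c ≥ n + 1`. Both sides of this inequality sum to `n (n + 1)` over `c`, so it is
an equality, and the symmetry of `s` finishes.
-/

/-- The circled set `C n` of the `n × n` Pulsar puzzle, as a predicate on cells `(r, c)`
(1-indexed).  `C 1 = {(1,1)}`, and for `n ≥ 2`, a cell `(r,c)` of the grid is circled iff
`r = 1`, or `r ≥ 2`, `c ≥ 2` and `(n - c + 1, r - 1)` is circled in `C (n-1)`. -/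
def Circled : ℕ → ℕ × ℕ → Prop
  | 0, _ => False
  | 1, p => p = (1, 1)
  | (n + 2), (r, c) =>
      1 ≤ r ∧ r ≤ n + 2 ∧ 1 ≤ c ∧ c ≤ n + 2 ∧
        (r = 1 ∨ (2 ≤ r ∧ 2 ≤ c ∧ Circled (n + 1) (n + 2 - c + 1, r - 1)))

/-- `f` is a Latin square of order `n`: on the grid of cells `(r, c)` with `1 ≤ r, c ≤ n`
it takes values in `{1, …, n}`, with distinct values on distinct cells of any one row
and on distinct cells of any one column. -/
def IsLatinSquare (n : ℕ) (f : ℕ × ℕ → ℕ) : Prop :=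
  (∀ r c, 1 ≤ r → r ≤ n → 1 ≤ c → c ≤ n → 1 ≤ f (r, c) ∧ f (r, c) ≤ n) ∧
  (∀ r c₁ c₂, 1 ≤ r → r ≤ n → 1 ≤ c₁ → c₁ ≤ n → 1 ≤ c₂ → c₂ ≤ n → c₁ ≠ c₂ →
    f (r, c₁) ≠ f (r, c₂)) ∧
  (∀ r₁ r₂ c, 1 ≤ r₁ → r₁ ≤ n → 1 ≤ r₂ → r₂ ≤ n → 1 ≤ c → c ≤ n → r₁ ≠ r₂ →
    f (r₁, c) ≠ f (r₂, c))

/-- `f` is a solution of the `n × n` Pulsar puzzle: a Latin square of order `n` such that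
each circled entry equals the number of circled cells carrying that same value. -/
def IsPulsarSolution (n : ℕ) (f : ℕ × ℕ → ℕ) : Prop :=
  IsLatinSquare n f ∧
    ∀ p, Circled n p → f p = Set.ncard {q : ℕ × ℕ | Circled n q ∧ f q = f p}

open Finset

theorem Circled.bounds : ∀ {n r c : ℕ}, Circled n (r, c) → 1 ≤ r ∧ r ≤ n ∧ 1 ≤ c ∧ c ≤ n
  | 0, _, _, h => h.elim
  | 1, _, _, h => by simp only [Circled, Prod.mk.injEq] at h; omega
  | _ + 2, _, _, ⟨h₁, h₂, h₃, h₄, _⟩ => ⟨h₁, h₂, h₃, h₄⟩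

theorem circled_top_row {n c : ℕ} (h₁ : 1 ≤ c) (h₂ : c ≤ n) : Circled n (1, c) := by
  match n with
  | 0 => omega
  | 1 => rw [show c = 1 by omega]; rfl
  | _ + 2 => exact ⟨le_rfl, by omega, h₁, h₂, Or.inl rfl⟩

theorem circled_succ_iff_of_two_le {n r c : ℕ} (hr : 2 ≤ r) :
    Circled (n + 1) (r, c) ↔ Circled n (n + 2 - c, r - 1) := by
  match n with
  | 0 => simp only [Circled, Prod.mk.injEq, iff_false]; omega
  | m + 1 =>
    refine ⟨fun ⟨_, _, _, _, h⟩ => ?_, fun h => ?_⟩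
    · obtain h | ⟨-, hc, h⟩ := h
      · omega
      · rwa [show m + 1 + 1 - c + 1 = m + 1 + 2 - c by omega] at h
    · have := h.bounds
      refine ⟨by omega, by omega, by omega, by omega, Or.inr ⟨hr, by omega, ?_⟩⟩
      rwa [show m + 1 + 1 - c + 1 = m + 1 + 2 - c by omega]

theorem sum_Icc_shift {M : Type*} [AddCommMonoid M] (n : ℕ) (g : ℕ → M) :
    ∑ r ∈ Icc 2 (n + 1), g (r - 1) = ∑ b ∈ Icc 1 n, g b := by
  apply sum_nbij' (· - 1) (· + 1) <;> intro a ha <;> simp only [mem_Icc] at * <;> omega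

theorem sum_Icc_reflect {M : Type*} [AddCommMonoid M] (n : ℕ) (g : ℕ → M) :
    ∑ c ∈ Icc 2 (n + 1), g (n + 2 - c) = ∑ a ∈ Icc 1 n, g a := by
  apply sum_nbij' (n + 2 - ·) (n + 2 - ·) <;> intro a ha <;> simp only [mem_Icc] at * <;> omega

open Classical in
noncomputable def colCount (n c : ℕ) : ℕ := #{r ∈ Icc 1 n | Circled n (r, c)}

open Classical in
noncomputable def rowCount (n r : ℕ) : ℕ := #{c ∈ Icc 1 n | Circled n (r, c)}

theorem rowCount_one (n : ℕ) : rowCount n 1 = n := by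
  classical
  rw [rowCount, filter_true_of_mem fun c hc => circled_top_row (mem_Icc.1 hc).1 (mem_Icc.1 hc).2,
    Nat.card_Icc, Nat.add_sub_cancel]

theorem colCount_succ_one (n : ℕ) : colCount (n + 1) 1 = 1 := by
  classical
  rw [colCount, ← insert_Icc_add_one_left_eq_Icc (by omega), filter_insert,
    if_pos (circled_top_row le_rfl (by omega)), card_insert_of_notMem (by simp),
    filter_false_of_mem fun r hr h => ?_, card_empty]
  have := ((circled_succ_iff_of_two_le (mem_Icc.1 hr).1).1 h).bounds
  omega

theorem colCount_succ {n c : ℕ} (h₁ : 2 ≤ c) (h₂ : c ≤ n + 1) :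
    colCount (n + 1) c = rowCount n (n + 2 - c) + 1 := by
  classical
  rw [colCount, ← insert_Icc_add_one_left_eq_Icc (by omega), filter_insert,
    if_pos (circled_top_row (by omega) h₂), card_insert_of_notMem (by simp)]
  simp only [Nat.reduceAdd]
  rw [filter_congr fun r hr => circled_succ_iff_of_two_le (mem_Icc.1 hr).1, card_filter,
    sum_Icc_shift n (fun b => if Circled n (n + 2 - c, b) then 1 else 0), ← card_filter, rowCount]

theorem rowCount_succ {n r : ℕ} (hr : 2 ≤ r) : rowCount (n + 1) r = colCount n (r - 1) := by
  classical
  rw [rowCount, ← insert_Icc_add_one_left_eq_Icc (by omega), filter_insert,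
    if_neg fun h => by have := ((circled_succ_iff_of_two_le hr).1 h).bounds; omega]
  simp only [Nat.reduceAdd]
  rw [filter_congr fun c _ => circled_succ_iff_of_two_le hr, card_filter,
    sum_Icc_reflect n (fun a => if Circled n (a, r - 1) then 1 else 0), ← card_filter, colCount]

theorem colCount_succ_self (n : ℕ) : colCount (n + 1) (n + 1) = n + 1 := by
  cases n with
  | zero => exact colCount_succ_one 0
  | succ m => rw [colCount_succ (by omega) le_rfl, show m + 1 + 2 - (m + 1 + 1) = 1 by omega,
      rowCount_one]

theorem sum_comp_colCount_and_rowCount {M : Type*} [AddCommMonoid M] (n : ℕ) :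
    (∀ F : ℕ → M, ∑ c ∈ Icc 1 n, F (colCount n c) = ∑ j ∈ Icc 1 n, F j) ∧
      ∀ F : ℕ → M, ∑ r ∈ Icc 1 n, F (rowCount n r) = ∑ j ∈ Icc 1 n, F j := by
  induction n with
  | zero => simp
  | succ n ih =>
    have hIcc : Icc 1 (n + 1) = insert 1 (Icc 2 (n + 1)) :=
      (insert_Icc_add_one_left_eq_Icc (by omega)).symm
    have h1 : 1 ∉ Icc 2 (n + 1) := by simp
    refine ⟨fun F => ?_, fun F => ?_⟩
    · calc ∑ c ∈ Icc 1 (n + 1), F (colCount (n + 1) c)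
          = F 1 + ∑ c ∈ Icc 2 (n + 1), F (rowCount n (n + 2 - c) + 1) := by
            rw [hIcc, sum_insert h1, colCount_succ_one]
            exact congrArg _ (sum_congr rfl fun c hc =>
              by rw [colCount_succ (mem_Icc.1 hc).1 (mem_Icc.1 hc).2])
        _ = F 1 + ∑ j ∈ Icc 2 (n + 1), F j := by
            rw [sum_Icc_reflect n (fun r => F (rowCount n r + 1)), ih.2 (fun j => F (j + 1)),
              show Icc 2 (n + 1) = (Icc 1 n).map (addRightEmbedding 1) by simp, sum_map]
            rfl
        _ = ∑ j ∈ Icc 1 (n + 1), F j := by rw [hIcc, sum_insert h1]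
    · calc ∑ r ∈ Icc 1 (n + 1), F (rowCount (n + 1) r)
          = ∑ r ∈ Icc 2 (n + 1), F (colCount n (r - 1)) + F (n + 1) := by
            rw [hIcc, sum_insert h1, rowCount_one, add_comm]
            exact congrArg (· + _) (sum_congr rfl fun r hr =>
              by rw [rowCount_succ (mem_Icc.1 hr).1])
        _ = ∑ j ∈ Icc 1 (n + 1), F j := by
            rw [sum_Icc_shift n (fun b => F (colCount n b)), ih.1, sum_Icc_succ_top (by omega)]

theorem sum_comp_colCount {M : Type*} [AddCommMonoid M] (n : ℕ) (F : ℕ → M) :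
    ∑ c ∈ Icc 1 n, F (colCount n c) = ∑ j ∈ Icc 1 n, F j :=
  (sum_comp_colCount_and_rowCount n).1 F

theorem colCount_add_reflect_and_rowCount_add_reflect (n : ℕ) :
    (∀ c, 1 ≤ c → c ≤ n → colCount n c + colCount n (n + 1 - c) = n + 1) ∧
      ∀ r, 2 ≤ r → r ≤ n → rowCount n r + rowCount n (n + 2 - r) = n := by
  induction n with
  | zero => exact ⟨fun c _ _ => by omega, fun r _ _ => by omega⟩
  | succ n ih =>
    refine ⟨fun c h₁ h₂ => ?_, fun r h₁ h₂ => ?_⟩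
    · rcases Nat.lt_or_ge 1 c with hc | hc
      · rcases Nat.lt_or_ge c (n + 1) with hc' | hc'
        · rw [colCount_succ hc h₂, colCount_succ (by omega) (by omega),
            show n + 2 - (n + 1 + 1 - c) = c by omega]
          have := ih.2 c hc (by omega)
          omega
        · rw [show c = n + 1 by omega, Nat.add_sub_cancel_left, colCount_succ_self,
            colCount_succ_one]
      · rw [show c = 1 by omega, Nat.add_sub_cancel, colCount_succ_self, colCount_succ_one,
          add_comm]
    · rw [rowCount_succ h₁, rowCount_succ (by omega),
        show n + 1 + 2 - r - 1 = n + 1 - (r - 1) by omega]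
      exact ih.1 (r - 1) (by omega) (by omega)

theorem colCount_add_reflect {n c : ℕ} (h₁ : 1 ≤ c) (h₂ : c ≤ n) :
    colCount n c + colCount n (n + 1 - c) = n + 1 :=
  (colCount_add_reflect_and_rowCount_add_reflect n).1 c h₁ h₂

theorem sum_Icc_id_mul_two (n : ℕ) : (∑ j ∈ Icc 1 n, j) * 2 = n * (n + 1) := by
  induction n with
  | zero => simp
  | succ n ih => rw [sum_Icc_succ_top (by omega), add_mul, ih]; ring

theorem sum_min_Icc {n k : ℕ} (hk : k ≤ n) :
    ∑ j ∈ Icc 1 n, min j k = ∑ w ∈ Icc (n + 1 - k) n, w := by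
  rcases Nat.eq_zero_or_pos k with rfl | hk₀
  · simp
  induction n, hk using Nat.le_induction with
  | base =>
    rw [Nat.add_sub_cancel_left]
    exact sum_congr rfl fun j hj => min_eq_left (mem_Icc.1 hj).2
  | succ m hkm ih =>
    rw [sum_Icc_succ_top (by omega), ih, sum_Icc_succ_top (by omega),
      ← insert_Icc_add_one_left_eq_Icc (by omega : m + 1 - k ≤ m), sum_insert (by simp),
      show m + 1 - k + 1 = m + 1 + 1 - k by omega]
    omega

open Classical in
noncomputable def circledCells (n : ℕ) : Finset (ℕ × ℕ) := {p ∈ Icc 1 n ×ˢ Icc 1 n | Circled n p}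

theorem mem_circledCells {n r c : ℕ} : (r, c) ∈ circledCells n ↔ Circled n (r, c) := by
  simp only [circledCells, mem_filter, mem_product, mem_Icc, and_iff_right_iff_imp]
  intro h
  have := h.bounds
  omega

open Classical in
theorem card_filter_circledCells (n : ℕ) (P : ℕ × ℕ → Prop) [DecidablePred P] :
    #{p ∈ circledCells n | P p} = ∑ c ∈ Icc 1 n, #{r ∈ Icc 1 n | Circled n (r, c) ∧ P (r, c)} := by
  simp only [circledCells, filter_filter, card_filter, sum_product_right]

namespace IsPulsarSolution

variable {n : ℕ} {f : ℕ × ℕ → ℕ} (hf : IsPulsarSolution n f)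
include hf

theorem apply_mem_Icc {r c : ℕ} (h : Circled n (r, c)) : f (r, c) ∈ Icc 1 n := by
  obtain ⟨h₁, h₂, h₃, h₄⟩ := h.bounds
  exact mem_Icc.2 (hf.1.1 r c h₁ h₂ h₃ h₄)

theorem bijOn_top_row : Set.BijOn (fun c => f (1, c)) (Icc 1 n : Set ℕ) (Icc 1 n : Set ℕ) := by
  have hmaps : Set.MapsTo (fun c => f (1, c)) (Icc 1 n : Set ℕ) (Icc 1 n : Set ℕ) := fun c hc =>
    hf.apply_mem_Icc (circled_top_row (mem_Icc.1 hc).1 (mem_Icc.1 hc).2)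
  have hinj : Set.InjOn (fun c => f (1, c)) (Icc 1 n : Set ℕ) := fun a ha b hb hab => by
    simp only [coe_Icc, Set.mem_Icc] at ha hb
    by_contra hne
    exact hf.1.2.1 1 a b le_rfl (by omega) ha.1 ha.2 hb.1 hb.2 hne hab
  exact ⟨hmaps, hinj, surjOn_of_injOn_of_card_le _ hmaps hinj le_rfl⟩

theorem card_filter_apply_eq {v : ℕ} (hv : v ∈ Icc 1 n) : #{p ∈ circledCells n | f p = v} = v := by
  obtain ⟨c, hc, rfl⟩ := hf.bijOn_top_row.surjOn hv
  simp only [coe_Icc, Set.mem_Icc] at hc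
  calc #{p ∈ circledCells n | f p = f (1, c)}
      = {q | Circled n q ∧ f q = f (1, c)}.ncard := by
        rw [← Set.ncard_coe_finset]
        congr 1
        ext ⟨r, c'⟩
        simp [mem_circledCells]
    _ = f (1, c) := (hf.2 _ (circled_top_row hc.1 hc.2)).symm

theorem card_filter_le_apply {k : ℕ} (hk : k ≤ n) :
    #{p ∈ circledCells n | n + 1 - k ≤ f p} = ∑ w ∈ Icc (n + 1 - k) n, w := by
  classical
  rw [card_eq_sum_card_fiberwise (f := f) (t := Icc (n + 1 - k) n) fun ⟨r, c⟩ hp => by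
    simp only [mem_coe, mem_filter, mem_circledCells] at hp
    exact mem_Icc.2 ⟨hp.2, (mem_Icc.1 (hf.apply_mem_Icc hp.1)).2⟩]
  refine sum_congr rfl fun w hw => ?_
  obtain ⟨hw₁, hw₂⟩ := mem_Icc.1 hw
  rw [filter_filter, filter_congr fun p _ => and_iff_right_of_imp fun h => h ▸ hw₁,
    hf.card_filter_apply_eq (mem_Icc.2 ⟨by omega, hw₂⟩)]

open Classical in
theorem card_column_filter_le (c k : ℕ) :
    #{r ∈ Icc 1 n | Circled n (r, c) ∧ n + 1 - k ≤ f (r, c)} ≤ min (colCount n c) k := by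
  refine le_min (card_le_card fun r hr => ?_) ?_
  · simp only [mem_filter] at hr ⊢
    exact ⟨hr.1, hr.2.1⟩
  · refine (card_le_card_of_injOn (fun r => f (r, c)) (t := Icc (n + 1 - k) n) (fun r hr => ?_)
      fun r₁ hr₁ r₂ hr₂ heq => ?_).trans (by simp only [Nat.card_Icc]; omega)
    · simp only [mem_coe, mem_filter, mem_Icc] at hr ⊢
      exact ⟨hr.2.2, (mem_Icc.1 (hf.apply_mem_Icc hr.2.1)).2⟩
    · simp only [mem_coe, mem_filter, mem_Icc] at hr₁ hr₂
      have := hr₁.2.1.bounds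
      by_contra hne
      exact hf.1.2.2 r₁ r₂ c hr₁.1.1 hr₁.1.2 hr₂.1.1 hr₂.1.2 this.2.2.1 this.2.2.2 hne heq

theorem le_apply_one_add_colCount {c : ℕ} (hc : c ∈ Icc 1 n) : n + 1 ≤ f (1, c) + colCount n c := by
  classical
  set k := colCount n c
  have hk : k ≤ n := (card_filter_le _ _).trans (by simp)
  have hsum : ∑ c' ∈ Icc 1 n, #{r ∈ Icc 1 n | Circled n (r, c') ∧ n + 1 - k ≤ f (r, c')} =
      ∑ c' ∈ Icc 1 n, min (colCount n c') k := by
    rw [← card_filter_circledCells n (n + 1 - k ≤ f ·), hf.card_filter_le_apply hk,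
      sum_comp_colCount n (min · k), sum_min_Icc hk]
  have hcol := (sum_eq_sum_iff_of_le fun c' _ => hf.card_column_filter_le c' k).1 hsum c hc
  rw [min_self, ← filter_filter] at hcol
  obtain ⟨hc₁, hc₂⟩ := mem_Icc.1 hc
  have hmem : 1 ∈ {r ∈ Icc 1 n | Circled n (r, c)} :=
    mem_filter.2 ⟨mem_Icc.2 ⟨le_rfl, by omega⟩, circled_top_row hc₁ hc₂⟩
  have := filter_card_eq hcol 1 hmem
  omega

theorem apply_one_add_colCount {c : ℕ} (hc : c ∈ Icc 1 n) : f (1, c) + colCount n c = n + 1 := by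
  have htop : ∑ c ∈ Icc 1 n, f (1, c) = ∑ j ∈ Icc 1 n, j :=
    sum_nbij _ hf.bijOn_top_row.mapsTo hf.bijOn_top_row.injOn hf.bijOn_top_row.surjOn fun _ _ => rfl
  have htotal : ∑ c ∈ Icc 1 n, (f (1, c) + colCount n c) = ∑ c ∈ Icc 1 n, (n + 1) := by
    rw [sum_add_distrib, htop, sum_comp_colCount n (fun j => j), sum_const, Nat.card_Icc,
      Nat.add_sub_cancel, smul_eq_mul]
    have := sum_Icc_id_mul_two n
    omega
  exact ((sum_eq_sum_iff_of_le fun c hc => hf.le_apply_one_add_colCount hc).1 htotal.symm c hc).symm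

end IsPulsarSolution

theorem pulsar_top_row_symmetric_sum_general (n : ℕ) (f : ℕ × ℕ → ℕ)
    (hf : IsPulsarSolution n f) :
    ∀ i, 1 ≤ i → i ≤ n → f (1, i) + f (1, n + 1 - i) = n + 1 := by
  intro i hi₁ hi₂
  have hi := hf.apply_one_add_colCount (mem_Icc.2 ⟨hi₁, hi₂⟩)
  have hi' := hf.apply_one_add_colCount (c := n + 1 - i) (mem_Icc.2 ⟨by omega, by omega⟩)
  have := colCount_add_reflect hi₁ hi₂
  omega

/-- In any solution of the `n × n` Pulsar puzzle, the top row satisfies the symmetric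
sum property: `f (1, i) + f (1, n + 1 - i) = n + 1`. -/
theorem pulsar_top_row_symmetric_sum (n : ℕ) (hn : 1 ≤ n) (f : ℕ × ℕ → ℕ)
    (hf : IsPulsarSolution n f) :
    ∀ i, 1 ≤ i → i ≤ n → f (1, i) + f (1, n + 1 - i) = n + 1 :=
  pulsar_top_row_symmetric_sum_general n f hf
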